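/- arXiv:1507.05385 — 3 statements merged into one kernel-verified Lean document; each statement's English description precedes it below -/
import Mathlib

section
/- For all t > 0 and ε > 0, ∫_ℝ |p_{t+ε}(y) - p_t(y)| dy ≤ C · min(log(t+ε) - log(t), 1) for a constant C independent of t and ε. -/
open Real MeasureTheory

lemma gauss_eq (c : ℝ) (hc : 0 < c) :
    ∫ y : ℝ, Real.exp (-(y ^ 2 / c)) = Real.sqrt (π * c) := by
  have h : (fun y : ℝ => Real.exp (-(y ^ 2 / c))) = fun y : ℝ => Real.exp (-(1/c) * y ^ 2) := by
    funext y; congr 1; field_simp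
  rw [h, integral_gaussian, show π / (1/c) = π * c by field_simp]

lemma gauss_integrable (c : ℝ) (hc : 0 < c) :
    Integrable (fun y : ℝ => Real.exp (-(y ^ 2 / c))) := by
  have h : (fun y : ℝ => Real.exp (-(y ^ 2 / c))) = fun y : ℝ => Real.exp (-(1/c) * y ^ 2) := by
    funext y; congr 1; field_simp
  rw [h]; exact integrable_exp_neg_mul_sq (by positivity)

set_option maxHeartbeats 1000000 in
theorem stmt_2 (κ : ℝ) (hκ : 0 < κ) :
    ∃ C : ℝ, 0 < C ∧ ∀ t ε : ℝ, 0 < t → 0 < ε →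
      (∫ y : ℝ, |(1 / Real.sqrt (2 * π * κ * (t + ε))) * Real.exp (-(y ^ 2 / (2 * κ * (t + ε))))
          - (1 / Real.sqrt (2 * π * κ * t)) * Real.exp (-(y ^ 2 / (2 * κ * t)))|)
        ≤ C * min (Real.log (t + ε) - Real.log t) 1 := by
  refine ⟨2, two_pos, fun t ε ht hε => ?_⟩
  have hpi := Real.pi_pos
  have hs : 0 < t + ε := by linarith
  have ha : 0 < 2 * κ * t := by positivity
  have hb : 0 < 2 * κ * (t + ε) := by positivity
  set P := Real.sqrt (2 * π * κ * t) with hPdef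
  set Q := Real.sqrt (2 * π * κ * (t + ε)) with hQdef
  have hPpos : 0 < P := Real.sqrt_pos.mpr (by positivity)
  have hQpos : 0 < Q := Real.sqrt_pos.mpr (by positivity)
  have hPQ : P ≤ Q := Real.sqrt_le_sqrt (by nlinarith [mul_pos hpi hκ])
  set R := Q / P with hRdef
  have hR1 : 1 ≤ R := (one_le_div hPpos).mpr hPQ
  have hRpos : 0 < R := lt_of_lt_of_le one_pos hR1
  -- log identity
  have hRsq : R ^ 2 = (t + ε) / t := by
    rw [hRdef, div_pow, hPdef, hQdef, Real.sq_sqrt (by positivity), Real.sq_sqrt (by positivity)]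
    field_simp
  have hL : Real.log (t + ε) - Real.log t = 2 * Real.log R := by
    rw [← Real.log_div (ne_of_gt hs) (ne_of_gt ht), ← hRsq, Real.log_pow]
    push_cast; ring
  -- integrability
  have iEs : Integrable (fun y : ℝ => Real.exp (-(y ^ 2 / (2 * κ * (t + ε))))) :=
    gauss_integrable _ hb
  have iEt : Integrable (fun y : ℝ => Real.exp (-(y ^ 2 / (2 * κ * t)))) :=
    gauss_integrable _ ha
  have vEs : (∫ y : ℝ, Real.exp (-(y ^ 2 / (2 * κ * (t + ε))))) = Q := by
    rw [gauss_eq _ hb, hQdef]; congr 1; ring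
  have vEt : (∫ y : ℝ, Real.exp (-(y ^ 2 / (2 * κ * t)))) = P := by
    rw [gauss_eq _ ha, hPdef]; congr 1; ring
  have iabs : Integrable (fun y : ℝ =>
      |(1 / Q) * Real.exp (-(y ^ 2 / (2 * κ * (t + ε))))
        - (1 / P) * Real.exp (-(y ^ 2 / (2 * κ * t)))|) :=
    ((iEs.const_mul _).sub (iEt.const_mul _)).abs
  have hAsAt : 1 / Q ≤ 1 / P := by
    apply one_div_le_one_div_of_le hPpos hPQ
  have hEE : ∀ y : ℝ, Real.exp (-(y ^ 2 / (2 * κ * t))) ≤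
      Real.exp (-(y ^ 2 / (2 * κ * (t + ε)))) := by
    intro y
    apply Real.exp_le_exp.mpr
    apply neg_le_neg
    gcongr
    · linarith
  rcases le_or_gt (Real.log (t + ε) - Real.log t) 1 with hcase | hcase
  · -- small case: min = L, bound integral by 2R - 2 ≤ 4 log R = 2 * L
    rw [min_eq_left hcase, hL]
    have hlogR : Real.log R ≤ 1 / 2 := by rw [hL] at hcase; linarith
    have hR2 : R ≤ 2 := by
      have h1 : R = Real.exp (Real.log R) := (Real.exp_log hRpos).symm
      have h2 : Real.exp (Real.log R) ≤ Real.exp (1 / 2) := Real.exp_le_exp.mpr hlogR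
      have h3 : Real.exp (1 / 2) ≤ 2 := by
        have h4 := Real.add_one_le_exp (-(1 / 2) : ℝ)
        rw [Real.exp_neg] at h4
        have h5 := Real.exp_pos (1 / 2 : ℝ)
        have h6 := mul_inv_cancel₀ (ne_of_gt h5)
        nlinarith [h6]
      linarith
    have hkey : R - 1 ≤ 2 * Real.log R := by
      have h4 := Real.add_one_le_exp (-((R - 1) / 2) : ℝ)
      rw [Real.exp_neg] at h4
      have h5 := Real.exp_pos ((R - 1) / 2 : ℝ)
      have h6 : Real.exp ((R - 1) / 2) * (Real.exp ((R - 1) / 2))⁻¹ = 1 :=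
        mul_inv_cancel₀ (ne_of_gt h5)
      have h7 : Real.exp ((R - 1) / 2) ≤ R := by nlinarith
      have h8 : (R - 1) / 2 ≤ Real.log R := (Real.le_log_iff_exp_le hRpos).mpr h7
      linarith
    -- pointwise bound
    have hpt : (fun y : ℝ =>
        |(1 / Q) * Real.exp (-(y ^ 2 / (2 * κ * (t + ε))))
          - (1 / P) * Real.exp (-(y ^ 2 / (2 * κ * t)))|) ≤ fun y : ℝ =>
        (1 / P - 1 / Q) * Real.exp (-(y ^ 2 / (2 * κ * (t + ε))))
          + (1 / P) * (Real.exp (-(y ^ 2 / (2 * κ * (t + ε))))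
            - Real.exp (-(y ^ 2 / (2 * κ * t)))) := by
      intro y
      have hE1 := (Real.exp_pos (-(y ^ 2 / (2 * κ * (t + ε))))).le
      have hE2 := hEE y
      have hP1 : (0:ℝ) < 1 / P := by positivity
      rw [abs_le]
      constructor <;> nlinarith
    have irhs : Integrable (fun y : ℝ =>
        (1 / P - 1 / Q) * Real.exp (-(y ^ 2 / (2 * κ * (t + ε))))
          + (1 / P) * (Real.exp (-(y ^ 2 / (2 * κ * (t + ε))))
            - Real.exp (-(y ^ 2 / (2 * κ * t))))) :=
      (iEs.const_mul _).add ((iEs.sub iEt).const_mul _)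
    calc (∫ y : ℝ, |(1 / Q) * Real.exp (-(y ^ 2 / (2 * κ * (t + ε))))
          - (1 / P) * Real.exp (-(y ^ 2 / (2 * κ * t)))|)
        ≤ ∫ y : ℝ, ((1 / P - 1 / Q) * Real.exp (-(y ^ 2 / (2 * κ * (t + ε))))
          + (1 / P) * (Real.exp (-(y ^ 2 / (2 * κ * (t + ε))))
            - Real.exp (-(y ^ 2 / (2 * κ * t))))) := integral_mono iabs irhs hpt
      _ = (1 / P - 1 / Q) * Q + (1 / P) * (Q - P) := by
          have i1 : Integrable (fun y : ℝ =>
              (1 / P - 1 / Q) * Real.exp (-(y ^ 2 / (2 * κ * (t + ε))))) := iEs.const_mul _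
          have i2 : Integrable (fun y : ℝ =>
              (1 / P) * (Real.exp (-(y ^ 2 / (2 * κ * (t + ε))))
                - Real.exp (-(y ^ 2 / (2 * κ * t))))) := (iEs.sub iEt).const_mul _
          rw [integral_add i1 i2, MeasureTheory.integral_const_mul, MeasureTheory.integral_const_mul,
            integral_sub iEs iEt, vEs, vEt]
      _ = 2 * R - 2 := by
          rw [hRdef]; field_simp [hPpos.ne', hQpos.ne']; ring
      _ ≤ 2 * (2 * Real.log R) := by linarith
  · -- large case: min = 1, bound integral by 2
    rw [min_eq_right hcase.le, mul_one]
    have hpt : (fun y : ℝ =>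
        |(1 / Q) * Real.exp (-(y ^ 2 / (2 * κ * (t + ε))))
          - (1 / P) * Real.exp (-(y ^ 2 / (2 * κ * t)))|) ≤ fun y : ℝ =>
        (1 / Q) * Real.exp (-(y ^ 2 / (2 * κ * (t + ε))))
          + (1 / P) * Real.exp (-(y ^ 2 / (2 * κ * t))) := by
      intro y
      have h1 : (0:ℝ) ≤ (1 / Q) * Real.exp (-(y ^ 2 / (2 * κ * (t + ε)))) := by positivity
      have h2 : (0:ℝ) ≤ (1 / P) * Real.exp (-(y ^ 2 / (2 * κ * t))) := by positivity
      rw [abs_le]; constructor <;> nlinarith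
    have irhs : Integrable (fun y : ℝ =>
        (1 / Q) * Real.exp (-(y ^ 2 / (2 * κ * (t + ε))))
          + (1 / P) * Real.exp (-(y ^ 2 / (2 * κ * t)))) :=
      (iEs.const_mul _).add (iEt.const_mul _)
    calc (∫ y : ℝ, |(1 / Q) * Real.exp (-(y ^ 2 / (2 * κ * (t + ε))))
          - (1 / P) * Real.exp (-(y ^ 2 / (2 * κ * t)))|)
        ≤ ∫ y : ℝ, ((1 / Q) * Real.exp (-(y ^ 2 / (2 * κ * (t + ε))))
          + (1 / P) * Real.exp (-(y ^ 2 / (2 * κ * t)))) := integral_mono iabs irhs hpt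
      _ = (1 / Q) * Q + (1 / P) * P := by
          have i1 : Integrable (fun y : ℝ =>
              (1 / Q) * Real.exp (-(y ^ 2 / (2 * κ * (t + ε))))) := iEs.const_mul _
          have i2 : Integrable (fun y : ℝ =>
              (1 / P) * Real.exp (-(y ^ 2 / (2 * κ * t)))) := iEt.const_mul _
          rw [integral_add i1 i2, MeasureTheory.integral_const_mul, MeasureTheory.integral_const_mul, vEs, vEt]
      _ = 2 := by field_simp; ring
end

section
/- For every δ > 0 and t > 0, ∫_0^t s^{-1/2} (log(s+δ) - log(s)) ds ≤ 4√δ · arctan(√(t/δ)) + 2√t · log(1 + δ/t). -/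
/-!
The bound is an equality. For `s > 0` the function
`F s = 2 √s (log (s + δ) - log s) + 4 √δ arctan √(s / δ)` (`sqrtLogPrimitive δ`) has derivative
`s^(-1/2) (log (s + δ) - log s)`, and `F` extends continuously to `F 0 = 0` because
`√s log s = 2 √s log √s → 0`. Since this derivative is nonnegative it is integrable on `(0, t]`,
so the fundamental theorem of calculus gives `∫₀ᵗ = F t`.
-/

open Real MeasureTheory intervalIntegral Set

noncomputable def sqrtLogPrimitive (δ s : ℝ) : ℝ :=
  2 * √s * (log (s + δ) - log s) + 4 * √δ * arctan √(s / δ)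

lemma sqrt_mul_log_eq (s : ℝ) : √s * log s = 2 * (√s * log √s) := by
  rcases le_or_gt 0 s with hs | hs
  · rw [log_sqrt hs]; ring
  · simp [sqrt_eq_zero_of_nonpos hs.le]

lemma continuous_sqrt_mul_log : Continuous fun s ↦ √s * log s := by
  simp_rw [sqrt_mul_log_eq]
  exact continuous_const.mul (continuous_mul_log.comp continuous_sqrt)

lemma continuousOn_sqrtLogPrimitive {δ : ℝ} (hδ : 0 < δ) :
    ContinuousOn (sqrtLogPrimitive δ) (Ici 0) := by
  have hlog : ContinuousOn (fun s ↦ log (s + δ)) (Ici 0) :=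
    (continuous_add_const δ).continuousOn.log fun s hs ↦ by
      have : (0 : ℝ) ≤ s := hs
      positivity
  have hsplit : ContinuousOn (fun s ↦ 2 * √s * log (s + δ) - 2 * (√s * log s)
      + 4 * √δ * arctan √(s / δ)) (Ici 0) := by
    refine ((continuousOn_const.mul continuous_sqrt.continuousOn).mul hlog |>.sub ?_).add ?_
    · exact (continuous_const.mul continuous_sqrt_mul_log).continuousOn
    · fun_prop
  refine hsplit.congr fun s _ ↦ ?_
  simp only [sqrtLogPrimitive]
  ring

@[simp]
lemma sqrtLogPrimitive_zero (δ : ℝ) : sqrtLogPrimitive δ 0 = 0 := by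
  simp [sqrtLogPrimitive]

lemma hasDerivAt_sqrtLogPrimitive {δ s : ℝ} (hδ : 0 < δ) (hs : 0 < s) :
    HasDerivAt (sqrtLogPrimitive δ) (s ^ (-(1 : ℝ) / 2) * (log (s + δ) - log s)) s := by
  have hsqrt : HasDerivAt (fun x ↦ √x) (1 / (2 * √s)) s := hasDerivAt_sqrt hs.ne'
  have hlog_add : HasDerivAt (fun x ↦ log (x + δ)) (1 / (s + δ)) s := by
    simpa using ((hasDerivAt_id s).add_const δ).log (by positivity)
  have hlog : HasDerivAt log (1 / s) s := by
    simpa [one_div] using hasDerivAt_log hs.ne'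
  have harctan : HasDerivAt (fun x ↦ arctan √(x / δ))
      (1 / (1 + √(s / δ) ^ 2) * (1 / δ / (2 * √(s / δ)))) s := by
    simpa using (((hasDerivAt_id s).div_const δ).sqrt (by positivity)).arctan
  refine (((hsqrt.const_mul 2).mul (hlog_add.sub hlog)).add
    (harctan.const_mul (4 * √δ))).congr_deriv ?_
  have hs2 : √s ^ 2 = s := sq_sqrt hs.le
  have hδ2 : √δ ^ 2 = δ := sq_sqrt hδ.le
  have hrpow : s ^ (-(1 : ℝ) / 2) = 1 / √s := by
    rw [sqrt_eq_rpow, neg_div, rpow_neg hs.le, inv_eq_one_div]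
  rw [sqrt_div hs.le, div_pow, hs2, hδ2, hrpow]
  field_simp
  simp only [Pi.sub_apply, add_comm δ s, hs2, hδ2]
  ring

lemma integral_rpow_neg_half_mul_log_sub_log {t δ : ℝ} (ht : 0 ≤ t) (hδ : 0 < δ) :
    ∫ s in (0 : ℝ)..t, s ^ (-(1 : ℝ) / 2) * (log (s + δ) - log s) = sqrtLogPrimitive δ t := by
  have hcont : ContinuousOn (sqrtLogPrimitive δ) (Icc 0 t) :=
    (continuousOn_sqrtLogPrimitive hδ).mono Icc_subset_Ici_self
  have hderiv : ∀ s ∈ Ioo 0 t, HasDerivAt (sqrtLogPrimitive δ)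
      (s ^ (-(1 : ℝ) / 2) * (log (s + δ) - log s)) s :=
    fun s hs ↦ hasDerivAt_sqrtLogPrimitive hδ hs.1
  have hnonneg : ∀ s ∈ Ioo 0 t, 0 ≤ s ^ (-(1 : ℝ) / 2) * (log (s + δ) - log s) :=
    fun s hs ↦ mul_nonneg (rpow_nonneg hs.1.le _)
      (sub_nonneg.2 (log_le_log hs.1 (by linarith)))
  have hint : IntervalIntegrable (fun s ↦ s ^ (-(1 : ℝ) / 2) * (log (s + δ) - log s))
      volume 0 t :=
    (intervalIntegrable_iff_integrableOn_Ioc_of_le ht).2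
      (integrableOn_deriv_of_nonneg hcont hderiv hnonneg)
  rw [integral_eq_sub_of_hasDerivAt_of_le ht hcont hderiv hint, sqrtLogPrimitive_zero, sub_zero]

lemma sqrtLogPrimitive_eq {t δ : ℝ} (ht : 0 < t) (hδ : 0 ≤ δ) :
    sqrtLogPrimitive δ t = 4 * √δ * arctan √(t / δ) + 2 * √t * log (1 + δ / t) := by
  rw [sqrtLogPrimitive, ← log_div (by positivity) ht.ne', add_div, div_self ht.ne']
  ring

theorem stmt_8 (t δ : ℝ) (ht : 0 < t) (hδ : 0 < δ) :
    ∫ s in (0 : ℝ)..t, s ^ (-(1 : ℝ) / 2) * (Real.log (s + δ) - Real.log s)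
      ≤ 4 * Real.sqrt δ * Real.arctan (Real.sqrt (t / δ))
        + 2 * Real.sqrt t * Real.log (1 + δ / t) := by
  rw [integral_rpow_neg_half_mul_log_sub_log ht.le hδ, sqrtLogPrimitive_eq ht hδ.le]
end

section
/- For every t > 0 and δ > 0, ∫_0^t s^{-1/2} (log(s+δ) - log(s)) ds ≤ C δ^{1/2} for a constant C independent of t and δ. -/
open Real MeasureTheory intervalIntegral

lemma aux_log_le (x : ℝ) (hx : 0 ≤ x) : Real.log (1 + x) ≤ 4 * x ^ ((1:ℝ)/4) := by
  set y := x ^ ((1:ℝ)/4) with hy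
  have hy0 : 0 ≤ y := Real.rpow_nonneg hx _
  have hx4 : x = y ^ 4 := by
    rw [hy, ← Real.rpow_natCast (x ^ ((1:ℝ)/4)) 4, ← Real.rpow_mul hx]
    norm_num
  have h1 : (1 + x) ≤ (1 + y) ^ 4 := by nlinarith [sq_nonneg y, sq_nonneg (1+y)]
  calc Real.log (1 + x) ≤ Real.log ((1 + y)^4) := Real.log_le_log (by linarith) h1
    _ = 4 * Real.log (1 + y) := by rw [Real.log_pow]; push_cast; ring
    _ ≤ 4 * y := by
        have := Real.log_le_sub_one_of_pos (x := 1 + y) (by linarith)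
        linarith

lemma aux_log_diff (s δ : ℝ) (hs : 0 < s) (hδ : 0 < δ) :
    Real.log (s + δ) - Real.log s = Real.log (1 + δ / s) := by
  rw [← Real.log_div (by positivity) hs.ne']
  congr 1
  field_simp

lemma aux_pt1 (s δ : ℝ) (hs : 0 < s) (hδ : 0 < δ) :
    s ^ (-(1:ℝ)/2) * (Real.log (s + δ) - Real.log s)
      ≤ 4 * δ ^ ((1:ℝ)/4) * s ^ (-(3:ℝ)/4) := by
  rw [aux_log_diff s δ hs hδ]
  have h1 : Real.log (1 + δ / s) ≤ 4 * (δ / s) ^ ((1:ℝ)/4) := aux_log_le _ (by positivity)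
  have h2 : (δ / s) ^ ((1:ℝ)/4) = δ ^ ((1:ℝ)/4) * s ^ (-(1:ℝ)/4) := by
    rw [Real.div_rpow hδ.le hs.le]; rw [show (-(1:ℝ)/4) = -((1:ℝ)/4) by norm_num, Real.rpow_neg hs.le, div_eq_mul_inv]
  have h3 : s ^ (-(1:ℝ)/2) * s ^ (-(1:ℝ)/4) = s ^ (-(3:ℝ)/4) := by
    rw [← Real.rpow_add hs]; norm_num
  have hsp : (0:ℝ) ≤ s ^ (-(1:ℝ)/2) := by positivity
  calc s ^ (-(1:ℝ)/2) * Real.log (1 + δ / s)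
      ≤ s ^ (-(1:ℝ)/2) * (4 * (δ ^ ((1:ℝ)/4) * s ^ (-(1:ℝ)/4))) := by
        rw [← h2]; exact mul_le_mul_of_nonneg_left h1 hsp
    _ = 4 * δ ^ ((1:ℝ)/4) * (s ^ (-(1:ℝ)/2) * s ^ (-(1:ℝ)/4)) := by ring
    _ = 4 * δ ^ ((1:ℝ)/4) * s ^ (-(3:ℝ)/4) := by rw [h3]

lemma aux_pt2 (s δ : ℝ) (hs : 0 < s) (hδ : 0 < δ) :
    s ^ (-(1:ℝ)/2) * (Real.log (s + δ) - Real.log s)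
      ≤ δ * s ^ (-(3:ℝ)/2) := by
  rw [aux_log_diff s δ hs hδ]
  have h1 : Real.log (1 + δ / s) ≤ δ / s := by
    have := Real.log_le_sub_one_of_pos (x := 1 + δ / s) (by positivity)
    linarith
  have h3 : s ^ (-(1:ℝ)/2) * s⁻¹ = s ^ (-(3:ℝ)/2) := by
    rw [← Real.rpow_neg_one s, ← Real.rpow_add hs]; norm_num
  have hsp : (0:ℝ) ≤ s ^ (-(1:ℝ)/2) := by positivity
  calc s ^ (-(1:ℝ)/2) * Real.log (1 + δ / s)
      ≤ s ^ (-(1:ℝ)/2) * (δ / s) := mul_le_mul_of_nonneg_left h1 hsp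
    _ = δ * (s ^ (-(1:ℝ)/2) * s⁻¹) := by ring
    _ = δ * s ^ (-(3:ℝ)/2) := by rw [h3]

lemma aux_nonneg (s δ : ℝ) (hs : 0 < s) (hδ : 0 < δ) :
    0 ≤ s ^ (-(1:ℝ)/2) * (Real.log (s + δ) - Real.log s) := by
  apply mul_nonneg (by positivity)
  have := Real.log_le_log hs (by linarith : s ≤ s + δ)
  linarith

lemma aux_meas (δ : ℝ) :
    Measurable (fun s : ℝ => s ^ (-(1:ℝ)/2) * (Real.log (s + δ) - Real.log s)) := by
  apply Measurable.mul
  · fun_prop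
  · exact (Real.measurable_log.comp (measurable_id.add_const δ)).sub Real.measurable_log

lemma aux_intble (a b δ : ℝ) (hab : 0 ≤ a) (hb : 0 ≤ b) (hδ : 0 < δ) :
    IntervalIntegrable (fun s : ℝ => s ^ (-(1:ℝ)/2) * (Real.log (s + δ) - Real.log s))
      volume a b := by
  have hbound : IntervalIntegrable (fun s : ℝ => 4 * δ ^ ((1:ℝ)/4) * s ^ (-(3:ℝ)/4))
      volume a b :=
    (intervalIntegral.intervalIntegrable_rpow' (by norm_num)).const_mul _
  apply hbound.mono_fun'
  · exact ((aux_meas δ).aestronglyMeasurable).restrict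
  · filter_upwards [MeasureTheory.ae_restrict_mem measurableSet_uIoc] with s hsmem
    have hs : 0 < s := lt_of_le_of_lt (le_min hab hb) hsmem.1
    have h0 := aux_nonneg s δ hs hδ
    have := aux_pt1 s δ hs hδ
    rw [Real.norm_eq_abs, abs_of_nonneg h0]
    exact this

theorem stmt_9 :
    ∃ C : ℝ, ∀ t δ : ℝ, 0 < t → 0 < δ →
      (∫ s in (0 : ℝ)..t, s ^ (-(1 : ℝ) / 2) * (Real.log (s + δ) - Real.log s))
        ≤ C * δ ^ ((1 : ℝ) / 2) := by
  use 18
  intro t δ ht hδ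
  -- piece A : for any 0 < b, integral from 0 to b is ≤ 16 δ^(1/4) b^(1/4)
  have pieceA : ∀ b : ℝ, 0 < b →
      (∫ s in (0:ℝ)..b, s ^ (-(1:ℝ)/2) * (Real.log (s + δ) - Real.log s))
        ≤ 16 * δ ^ ((1:ℝ)/4) * b ^ ((1:ℝ)/4) := by
    intro b hb
    have h1 : (∫ s in (0:ℝ)..b, s ^ (-(1:ℝ)/2) * (Real.log (s + δ) - Real.log s))
        ≤ ∫ s in (0:ℝ)..b, 4 * δ ^ ((1:ℝ)/4) * s ^ (-(3:ℝ)/4) := by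
      apply intervalIntegral.integral_mono_on hb.le
        (aux_intble 0 b δ le_rfl hb.le hδ)
        ((intervalIntegral.intervalIntegrable_rpow' (by norm_num)).const_mul _)
      intro s hsmem
      rcases eq_or_lt_of_le hsmem.1 with h | h
      · rw [← h]
        simp [Real.zero_rpow (by norm_num : (-(1:ℝ)/2) ≠ 0),
          Real.zero_rpow (by norm_num : (-(3:ℝ)/4) ≠ 0)]
      · exact aux_pt1 s δ h hδ
    have h2 : (∫ s in (0:ℝ)..b, 4 * δ ^ ((1:ℝ)/4) * s ^ (-(3:ℝ)/4))
        = 16 * δ ^ ((1:ℝ)/4) * b ^ ((1:ℝ)/4) := by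
      rw [intervalIntegral.integral_const_mul, integral_rpow (Or.inl (by norm_num))]
      rw [Real.zero_rpow (by norm_num : (-(3:ℝ)/4 + 1) ≠ 0)]
      norm_num
      ring
    linarith
  -- piece B : for δ ≤ t
  have pieceB : δ ≤ t →
      (∫ s in δ..t, s ^ (-(1:ℝ)/2) * (Real.log (s + δ) - Real.log s))
        ≤ 2 * δ ^ ((1:ℝ)/2) := by
    intro hdt
    have h1 : (∫ s in δ..t, s ^ (-(1:ℝ)/2) * (Real.log (s + δ) - Real.log s))
        ≤ ∫ s in δ..t, δ * s ^ (-(3:ℝ)/2) := by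
      apply intervalIntegral.integral_mono_on hdt
        (aux_intble δ t δ hδ.le ht.le hδ)
        ((intervalIntegral.intervalIntegrable_rpow (Or.inr (by
          rw [Set.uIcc_of_le hdt]
          intro h0
          exact absurd h0.1 (by linarith)))).const_mul _)
      intro s hsmem
      exact aux_pt2 s δ (lt_of_lt_of_le hδ hsmem.1) hδ
    have h2 : (∫ s in δ..t, δ * s ^ (-(3:ℝ)/2))
        = δ * ((t ^ (-(1:ℝ)/2) - δ ^ (-(1:ℝ)/2)) / (-(1:ℝ)/2)) := by
      rw [intervalIntegral.integral_const_mul, integral_rpow (Or.inr ⟨by norm_num, by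
        rw [Set.uIcc_of_le hdt]
        intro h0
        exact absurd h0.1 (by linarith)⟩)]
      norm_num
    have h3 : δ * ((t ^ (-(1:ℝ)/2) - δ ^ (-(1:ℝ)/2)) / (-(1:ℝ)/2)) ≤ 2 * δ ^ ((1:ℝ)/2) := by
      have ht2 : (0:ℝ) ≤ t ^ (-(1:ℝ)/2) := Real.rpow_nonneg ht.le _
      have hδ2 : δ * δ ^ (-(1:ℝ)/2) = δ ^ ((1:ℝ)/2) := by
        nth_rewrite 1 [← Real.rpow_one δ]
        rw [← Real.rpow_add hδ]
        norm_num
      have : δ * ((t ^ (-(1:ℝ)/2) - δ ^ (-(1:ℝ)/2)) / (-(1:ℝ)/2))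
          = 2 * (δ * δ ^ (-(1:ℝ)/2)) - 2 * (δ * t ^ (-(1:ℝ)/2)) := by ring
      rw [this, hδ2]
      nlinarith
    linarith
  rcases le_or_gt t δ with hcase | hcase
  · have hA := pieceA t ht
    have h4 : 16 * δ ^ ((1:ℝ)/4) * t ^ ((1:ℝ)/4) ≤ 16 * δ ^ ((1:ℝ)/2) := by
      have h5 : t ^ ((1:ℝ)/4) ≤ δ ^ ((1:ℝ)/4) :=
        Real.rpow_le_rpow ht.le hcase (by norm_num)
      have h6 : δ ^ ((1:ℝ)/4) * δ ^ ((1:ℝ)/4) = δ ^ ((1:ℝ)/2) := by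
        rw [← Real.rpow_add hδ]; norm_num
      calc 16 * δ ^ ((1:ℝ)/4) * t ^ ((1:ℝ)/4)
          ≤ 16 * δ ^ ((1:ℝ)/4) * δ ^ ((1:ℝ)/4) := by
            apply mul_le_mul_of_nonneg_left h5 (by positivity)
        _ = 16 * δ ^ ((1:ℝ)/2) := by rw [mul_assoc, h6]
    have hp : (0:ℝ) < δ ^ ((1:ℝ)/2) := Real.rpow_pos_of_pos hδ _
    linarith
  · have hsplit : (∫ s in (0:ℝ)..δ, s ^ (-(1:ℝ)/2) * (Real.log (s + δ) - Real.log s))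
        + (∫ s in δ..t, s ^ (-(1:ℝ)/2) * (Real.log (s + δ) - Real.log s))
        = ∫ s in (0:ℝ)..t, s ^ (-(1:ℝ)/2) * (Real.log (s + δ) - Real.log s) :=
      intervalIntegral.integral_add_adjacent_intervals
        (aux_intble 0 δ δ le_rfl hδ.le hδ) (aux_intble δ t δ hδ.le ht.le hδ)
    have hA := pieceA δ hδ
    have hB := pieceB hcase.le
    have h6 : δ ^ ((1:ℝ)/4) * δ ^ ((1:ℝ)/4) = δ ^ ((1:ℝ)/2) := by
      rw [← Real.rpow_add hδ]; norm_num
    have h7 : 16 * δ ^ ((1:ℝ)/4) * δ ^ ((1:ℝ)/4) = 16 * δ ^ ((1:ℝ)/2) := by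
      rw [mul_assoc, h6]
    linarith
end
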